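/- Let X : [0,∞) → ℝ be a function, b > 0, and define V(t) = X(t) - max( min((X(0)-b)⁺, inf_{0≤u≤t} X(u)), sup_{0≤s≤t} min(X(s)-b, inf_{s≤u≤t} X(u)) ). If X(0) ∈ [0,b], then V(t) ∈ [0,b] for all t ≥ 0. -/
import Mathlib


theorem stmt_15 (X : ℝ → ℝ) (b : ℝ) (hb : 0 < b)
    (hbddB : ∀ t, BddBelow (X '' Set.Icc 0 t))
    (hbddA : ∀ t, BddAbove (X '' Set.Icc 0 t))
    (V : ℝ → ℝ)
    (hV : V = fun t => X t -
      max (min (max (X 0 - b) 0) (sInf (X '' Set.Icc 0 t)))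
        (sSup {y | ∃ s ∈ Set.Icc (0:ℝ) t, y = min (X s - b) (sInf (X '' Set.Icc s t))}))
    (hX0 : X 0 ∈ Set.Icc (0:ℝ) b) :
    ∀ t ≥ 0, V t ∈ Set.Icc (0:ℝ) b := by
  subst hV
  intro t ht
  beta_reduce
  have hBB : BddBelow (X '' Set.Icc 0 t) := hbddB t
  have hsub : ∀ s ∈ Set.Icc (0:ℝ) t, X '' Set.Icc s t ⊆ X '' Set.Icc 0 t := by
    rintro s hs x ⟨u, hu, rfl⟩
    exact ⟨u, ⟨le_trans hs.1 hu.1, hu.2⟩, rfl⟩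
  set T := {y | ∃ s ∈ Set.Icc (0:ℝ) t, y = min (X s - b) (sInf (X '' Set.Icc s t))} with hT
  have hTne : T.Nonempty := ⟨_, 0, ⟨le_refl 0, ht⟩, rfl⟩
  have hTub : ∀ y ∈ T, y ≤ X t := by
    rintro y ⟨s, hs, rfl⟩
    have h1 : sInf (X '' Set.Icc s t) ≤ X t :=
      csInf_le (hBB.mono (hsub s hs)) ⟨t, ⟨hs.2, le_refl t⟩, rfl⟩
    exact le_trans (min_le_right _ _) h1
  have hSle : sSup T ≤ X t := csSup_le hTne hTub
  have hmem : min (X t - b) (sInf (X '' Set.Icc t t)) ∈ T := ⟨t, ⟨ht, le_refl t⟩, rfl⟩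
  have hItt : sInf (X '' Set.Icc t t) = X t := by
    rw [Set.Icc_self, Set.image_singleton, csInf_singleton]
  have hSge : X t - b ≤ sSup T := by
    have h := le_csSup ⟨X t, hTub⟩ hmem
    rw [hItt, min_eq_left (by linarith : X t - b ≤ X t)] at h
    exact h
  have hAle : min (max (X 0 - b) 0) (sInf (X '' Set.Icc 0 t)) ≤ X t :=
    le_trans (min_le_right _ _) (csInf_le hBB ⟨t, ⟨ht, le_refl t⟩, rfl⟩)
  have hmax := le_max_right (min (max (X 0 - b) 0) (sInf (X '' Set.Icc 0 t))) (sSup T)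
  have hmaxle : max (min (max (X 0 - b) 0) (sInf (X '' Set.Icc 0 t))) (sSup T) ≤ X t :=
    max_le hAle hSle
  rw [Set.mem_Icc]
  constructor <;> [linarith; linarith]
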